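/- Let f : Y → X be a continuous surjective map of topological spaces such that every fiber f⁻¹(x) is connected, and assume f admits local sections through every point (e.g. f is a quotient map). If Y is path-connected and locally path-connected, then the induced homomorphism f_* : π₁(Y, y₀) → π₁(X, f(y₀)) is surjective. -/

import Mathlib

open Topology Topology.Homotopy unitInterval in
noncomputable def piInduced {X Y : Type*} [TopologicalSpace X] [TopologicalSpace Y]
    (f : C(X, Y)) (n : ℕ) (x : X) : π_ n X x → π_ n Y (f x) :=
  Quotient.map
    (fun g => ⟨f.comp g.1, fun y hy => by
      simp only [ContinuousMap.comp_apply, g.2 y hy]⟩)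
    (fun g h H => H.map (fun F => F.compContinuousMap f))

/-!
Two points of a fibre of `f` are joined by a path whose image under `f` is null-homotopic. Near a
point `c` of the fibre, a local section `s` through `c` turns a short path `α` from `c` into the
loop `s ∘ f ∘ α` at `c`, which lies over the same path as `α`, so `(s ∘ f ∘ α)⁻¹ · α` will do;
connectedness of the fibre spreads this over the whole fibre.

A loop `γ` at `f y₀` is lifted by a connectedness argument along its parameter: "any two points
over the endpoints of `γ|[a, b]` are joined by a path lying over `γ|[a, b]` up to homotopy" is
transitive in `(a, b)` and holds for nearby `a, b`, since `γ|[a, b]` then stays in the domain of a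
local section and the fibre paths above correct the endpoints of its lift.
-/

section

open CategoryTheory FundamentalGroupoid Topology

variable {Y X Z : Type*} [TopologicalSpace Y] [TopologicalSpace X] [TopologicalSpace Z]

-- Conditions `f y = g z` are stated as `(map f).obj (mk y) = (map g).obj (mk z)`: the `eqToHom`s
-- they give then have literally the (co)domains of `(map f).map _`, which `simp` needs.
theorem FundamentalGroupoid.map_map_eq_of_apply_eq {f : C(Y, X)} {g : C(Z, X)} {y y' : Y}
    {z z' : Z} {p : Path y y'} {q : Path z z'} (h : ∀ t, f (p t) = g (q t))
    (h₀ : (map f).obj (mk y) = (map g).obj (mk z))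
    (h₁ : (map f).obj (mk y') = (map g).obj (mk z')) :
    (map f).map (fromPath (.mk p)) =
      eqToHom h₀ ≫ (map g).map (fromPath (.mk q)) ≫ eqToHom h₁.symm :=
  (conj_eqToHom_iff_heq _ _ h₀ h₁).2 (Path.Homotopic.hpath_hext h)

def Path.codRestrict {x y : X} (γ : Path x y) (V : Set X) (hγ : ∀ t, γ t ∈ V) :
    Path (⟨x, γ.source ▸ hγ 0⟩ : V) ⟨y, γ.target ▸ hγ 1⟩ where
  toFun := Set.codRestrict γ V hγ
  continuous_toFun := γ.continuous.codRestrict hγ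
  source' := Subtype.ext γ.source
  target' := Subtype.ext γ.target

theorem exists_map_eq_of_section {f : C(Y, X)} {V : Set X} {s : C(V, Y)}
    (hs : ∀ v : V, f (s v) = v) {g : C(Z, X)} {z z' : Z} (ρ : Path z z')
    (hρ : ∀ t, g (ρ t) ∈ V) {v v' : V} (h₀ : (map f).obj (mk (s v)) = (map g).obj (mk z))
    (h₁ : (map f).obj (mk (s v')) = (map g).obj (mk z')) :
    ∃ δ : mk (s v) ⟶ mk (s v'),
      (map f).map δ = eqToHom h₀ ≫ (map g).map (fromPath (.mk ρ)) ≫ eqToHom h₁.symm := by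
  have hv : (v : X) = g z := (hs v).symm.trans (congrArg as h₀)
  have hv' : (v' : X) = g z' := (hs v').symm.trans (congrArg as h₁)
  exact ⟨(map s).map (fromPath (.mk (((ρ.map g.continuous).codRestrict V hρ).cast
    (Subtype.ext hv) (Subtype.ext hv')))),
    map_map_eq_of_apply_eq (fun t => hs _) h₀ h₁⟩

def HasLocalSections (f : C(Y, X)) : Prop :=
  ∀ y : Y, ∃ (V : Set X) (_ : IsOpen V) (hmem : f y ∈ V) (s : C(V, Y)),
    (∀ v : V, f (s v) = v) ∧ s ⟨f y, hmem⟩ = y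

namespace HasLocalSections

variable {f : C(Y, X)} (hf : HasLocalSections f)
include hf

theorem eventually_exists_map_eq_eqToHom [LocallyPathConnectedSpace Y] (c : Y) :
    ∀ᶠ c' in 𝓝 c, ∀ h : (map f).obj (mk c) = (map f).obj (mk c'),
      ∃ β : mk c ⟶ mk c', (map f).map β = eqToHom h := by
  obtain ⟨V, hV, hmem, s, hs, hsc⟩ := hf c
  filter_upwards [((hV.preimage f.continuous).pathComponentIn c).mem_nhds
    (mem_pathComponentIn_self hmem)] with c' ⟨α, hα⟩ h
  have hfc : f c = f c' := congrArg as h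
  have hmem' : f c' ∈ V := hfc ▸ hmem
  have hsc' : s ⟨f c', hmem'⟩ = c := by simp only [← hfc, hsc]
  have h₀ : (map f).obj (mk (s ⟨f c, hmem⟩)) = (map f).obj (mk c) := congrArg mk (hs _)
  have h₁ : (map f).obj (mk (s ⟨f c', hmem'⟩)) = (map f).obj (mk c') := congrArg mk (hs _)
  obtain ⟨δ, hδ⟩ := exists_map_eq_of_section hs α hα h₀ h₁
  refine ⟨eqToHom (congrArg mk hsc'.symm) ≫ inv δ ≫ eqToHom (congrArg mk hsc) ≫
    fromPath (.mk α), ?_⟩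
  simp only [Functor.map_comp, Functor.map_inv, eqToHom_map, hδ, IsIso.inv_comp, inv_eqToHom,
    Category.assoc, eqToHom_trans_assoc, eqToHom_refl, Category.id_comp, IsIso.inv_hom_id,
    Category.comp_id, eqToHom_trans]

theorem exists_map_eq_eqToHom [LocallyPathConnectedSpace Y] {y y' : Y}
    (hfib : IsPreconnected (f ⁻¹' {f y'})) (h : (map f).obj (mk y) = (map f).obj (mk y')) :
    ∃ β : mk y ⟶ mk y', (map f).map β = eqToHom h := by
  let P (c c' : Y) : Prop := ∃ (h : (map f).obj (mk c) = (map f).obj (mk c'))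
    (β : mk c ⟶ mk c'), (map f).map β = eqToHom h
  suffices P y y' from let ⟨_, β, hβ⟩ := this; ⟨β, hβ⟩
  refine hfib.induction₂ P ?_ ?_ ?_ (congrArg as h) rfl
  · intro c hc
    filter_upwards [nhdsWithin_le_nhds (hf.eventually_exists_map_eq_eqToHom c),
      self_mem_nhdsWithin] with c' hβ hc'
    have h : (map f).obj (mk c) = (map f).obj (mk c') := congrArg mk (hc.trans hc'.symm)
    exact ⟨h, hβ h⟩
  · rintro c c' c'' - - - ⟨h, β, hβ⟩ ⟨h', β', hβ'⟩
    exact ⟨h.trans h', β ≫ β', by simp only [Functor.map_comp, hβ, hβ', eqToHom_trans]⟩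
  · rintro c c' - - ⟨h, β, hβ⟩
    exact ⟨h.symm, inv β, by simp only [Functor.map_inv, hβ, inv_eqToHom]⟩

end HasLocalSections

def LiftsPathClasses (f : C(Y, X)) (g : C(Z, X)) (z z' : Z) : Prop :=
  ∀ (p : mk z ⟶ mk z') (y y' : Y) (hy : (map f).obj (mk y) = (map g).obj (mk z))
    (hy' : (map f).obj (mk y') = (map g).obj (mk z')),
    ∃ ℓ : mk y ⟶ mk y', (map f).map ℓ = eqToHom hy ≫ (map g).map p ≫ eqToHom hy'.symm

namespace LiftsPathClasses

variable {f : C(Y, X)} {g : C(Z, X)} {z z' z'' : Z}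

theorem symm (h : LiftsPathClasses f g z z') : LiftsPathClasses f g z' z := by
  intro p y y' hy hy'
  obtain ⟨ℓ, hℓ⟩ := h (inv p) y' y hy' hy
  exact ⟨inv ℓ, by simp only [Functor.map_inv, hℓ, IsIso.inv_comp, inv_eqToHom, IsIso.inv_inv,
    Category.assoc]⟩

theorem trans [SimplyConnectedSpace Z] (hfib : (f ⁻¹' {g z'}).Nonempty)
    (h : LiftsPathClasses f g z z') (h' : LiftsPathClasses f g z' z'') :
    LiftsPathClasses f g z z'' := by
  intro p y y'' hy hy''
  obtain ⟨y', hfy'⟩ := hfib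
  have hy' : (map f).obj (mk y') = (map g).obj (mk z') := congrArg mk hfy'
  let p₁ : mk z ⟶ mk z' := fromPath (.mk (PathConnectedSpace.somePath z z'))
  let p₂ : mk z' ⟶ mk z'' := fromPath (.mk (PathConnectedSpace.somePath z' z''))
  obtain ⟨ℓ, hℓ⟩ := h p₁ y y' hy hy'
  obtain ⟨ℓ', hℓ'⟩ := h' p₂ y' y'' hy' hy''
  refine ⟨ℓ ≫ ℓ', ?_⟩
  rw [Subsingleton.elim (α := Path.Homotopic.Quotient z z'') p (p₁ ≫ p₂)]
  simp only [Functor.map_comp, hℓ, hℓ', Category.assoc, eqToHom_trans_assoc, eqToHom_refl,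
    Category.id_comp]

end LiftsPathClasses

namespace HasLocalSections

variable {f : C(Y, X)} (hf : HasLocalSections f)
include hf

theorem eventually_liftsPathClasses [LocallyPathConnectedSpace Y] [LocallyPathConnectedSpace Z]
    [SimplyConnectedSpace Z] (hfib : ∀ x : X, IsConnected (f ⁻¹' {x})) (g : C(Z, X)) (z : Z) :
    ∀ᶠ z' in 𝓝 z, LiftsPathClasses f g z z' := by
  obtain ⟨y₁, hy₁⟩ := (hfib (g z)).nonempty
  obtain ⟨V, hV, hmem, s, hs, -⟩ := hf y₁
  rw [show f y₁ = g z from hy₁] at hmem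
  filter_upwards [((hV.preimage g.continuous).pathComponentIn z).mem_nhds
    (mem_pathComponentIn_self hmem)] with z' ⟨ρ, hρ⟩
  intro p y y' hy hy'
  have hmem' : g z' ∈ V := ρ.target ▸ hρ 1
  have h₀ : (map f).obj (mk (s ⟨g z, hmem⟩)) = (map g).obj (mk z) := congrArg mk (hs _)
  have h₁ : (map f).obj (mk (s ⟨g z', hmem'⟩)) = (map g).obj (mk z') := congrArg mk (hs _)
  obtain ⟨δ, hδ⟩ := exists_map_eq_of_section hs ρ hρ h₀ h₁
  obtain ⟨β, hβ⟩ := hf.exists_map_eq_eqToHom (hfib _).isPreconnected (hy.trans h₀.symm)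
  obtain ⟨β', hβ'⟩ := hf.exists_map_eq_eqToHom (hfib _).isPreconnected (h₁.trans hy'.symm)
  refine ⟨β ≫ δ ≫ β', ?_⟩
  rw [Subsingleton.elim (α := Path.Homotopic.Quotient z z') p (fromPath (.mk ρ))]
  simp only [Functor.map_comp, hβ, hδ, hβ', Category.assoc, eqToHom_trans_assoc, eqToHom_trans]

theorem liftsPathClasses [LocallyPathConnectedSpace Y] [LocallyPathConnectedSpace Z]
    [SimplyConnectedSpace Z] (hfib : ∀ x : X, IsConnected (f ⁻¹' {x})) (g : C(Z, X))
    (z z' : Z) : LiftsPathClasses f g z z' :=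
  PreconnectedSpace.induction₂' _
    (fun z => (hf.eventually_liftsPathClasses hfib g z).mono fun _ h => ⟨h, h.symm⟩)
    ⟨fun _ _ _ => LiftsPathClasses.trans (hfib _).nonempty⟩ z z'

theorem surjective_fundamentalGroup_map [LocallyPathConnectedSpace Y]
    (hfib : ∀ x : X, IsConnected (f ⁻¹' {x})) (y₀ : Y) :
    Function.Surjective (FundamentalGroup.map f y₀) := by
  intro γ
  obtain ⟨γ, rfl⟩ := Path.Homotopic.Quotient.mk_surjective γ
  -- Reparametrise `γ` over `ℝ`, which is simply connected and locally path-connected.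
  let g : C(ℝ, X) := ⟨γ.extend, γ.continuous_extend⟩
  let ι : Path (0 : ℝ) 1 := ⟨⟨Subtype.val, continuous_subtype_val⟩, rfl, rfl⟩
  have h₀ : (map f).obj (mk y₀) = (map g).obj (mk 0) := congrArg mk γ.extend_zero.symm
  have h₁ : (map f).obj (mk y₀) = (map g).obj (mk 1) := congrArg mk γ.extend_one.symm
  obtain ⟨ℓ, hℓ⟩ := hf.liftsPathClasses hfib g 0 1 (fromPath (.mk ι)) y₀ y₀ h₀ h₁
  refine ⟨ℓ, hℓ.trans ?_⟩
  exact ((conj_eqToHom_iff_heq _ _ h₀ h₁).2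
    (Path.Homotopic.hpath_hext fun t => (γ.extend_extends' t).symm)).symm

end HasLocalSections

theorem pi1EquivFundamentalGroup_piInduced (f : C(Y, X)) (y₀ : Y) (q : π_ 1 Y y₀) :
    HomotopyGroup.pi1EquivFundamentalGroup (piInduced f 1 y₀ q) =
      FundamentalGroup.map f y₀ (HomotopyGroup.pi1EquivFundamentalGroup q) := by
  induction q using Quotient.inductionOn
  rfl

end

open Topology in
theorem statement3_general {Y X : Type*} [TopologicalSpace Y] [TopologicalSpace X]
    (f : C(Y, X))
    (hfibers : ∀ x : X, IsConnected (f ⁻¹' {x}))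
    (hlocsec : ∀ y : Y, ∃ (V : Set X) (hV : IsOpen V) (hmem : f y ∈ V) (s : C(V, Y)),
      (∀ v : V, f (s v) = v) ∧ s ⟨f y, hmem⟩ = y)
    [LocallyPathConnectedSpace Y]
    (y₀ : Y) :
    Function.Surjective (piInduced f 1 y₀) := by
  intro q
  obtain ⟨p, hp⟩ := HasLocalSections.surjective_fundamentalGroup_map hlocsec hfibers y₀
    (HomotopyGroup.pi1EquivFundamentalGroup q)
  refine ⟨HomotopyGroup.pi1EquivFundamentalGroup.symm p,
    HomotopyGroup.pi1EquivFundamentalGroup.injective ?_⟩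
  rw [pi1EquivFundamentalGroup_piInduced, Equiv.apply_symm_apply, hp]

open Topology in
/-- a continuous surjection with connected fibers admitting local sections
through every point, from a path-connected, locally path-connected space, induces a
surjection on fundamental groups. -/
theorem statement3 {Y X : Type*} [TopologicalSpace Y] [TopologicalSpace X]
    (f : C(Y, X)) (hsurj : Function.Surjective f)
    (hfibers : ∀ x : X, IsConnected (f ⁻¹' {x}))
    (hlocsec : ∀ y : Y, ∃ (V : Set X) (hV : IsOpen V) (hmem : f y ∈ V) (s : C(V, Y)),
      (∀ v : V, f (s v) = v) ∧ s ⟨f y, hmem⟩ = y)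
    [PathConnectedSpace Y] [LocallyPathConnectedSpace Y]
    (y₀ : Y) :
    Function.Surjective (piInduced f 1 y₀) :=
  statement3_general f hfibers hlocsec y₀
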